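/- Let 𝔠 be a filtered Floer-Novikov complex over a Noetherian ring R. Then for every nonzero class a ∈ H_*(𝔠), the spectral number ρ(a) lies in the image of the action functional: ρ(a) ∈ 𝒜(P) (the spectrality property). -/

import Mathlib

noncomputable section

open Filter

variable {R : Type*} [CommRing R] {Γ : Type*} [CommGroup Γ] {P : Type*} [MulAction Γ P]

/-- The chain condition for the downward-completed Floer complex: for every `C`
only finitely many points with nonzero coefficient have action greater than `C`. -/
def IsFloerChain (act : P → ℝ) (c : P → R) : Prop :=
  ∀ C : ℝ, {p : P | c p ≠ 0 ∧ C < act p}.Finite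

/-- The boundary operator determined by the incidence numbers `bnd`:
`(∂c)(q) = Σ_p c(p) · n(p,q)` (a finite sum on Floer chains). -/
def floerBdry (bnd : P → P → R) (c : P → R) : P → R :=
  fun q => ∑ᶠ p : P, c p * bnd p q

/-- The filtration level `ℓ(c) = max {𝒜(p) : c_p ≠ 0}` (with `ℓ(0) = -∞`). -/
def floerLevel (act : P → ℝ) (c : P → R) : EReal :=
  ⨆ p ∈ {p : P | c p ≠ 0}, (act p : EReal)

/-- A filtered Floer–Novikov complex over `R`: a principal `Γ`-bundle `P → S`
with `S` finite (encoded as a free `Γ`-action on `P` with finitely many orbits),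
an action functional and period homomorphism satisfying
`𝒜(g·p) = 𝒜(p) − ω(g)`, and incidence numbers `n(p,q)` which strictly decrease
the action, are `Γ`-invariant, and define a boundary operator on the completed
complex squaring to zero. -/
structure FloerComplex (R : Type*) [CommRing R] (Γ : Type*) [CommGroup Γ]
    (P : Type*) [MulAction Γ P] where
  /-- the `Γ`-action on the total space `P` is free -/
  free : ∀ (g : Γ) (p : P), g • p = p → g = 1
  /-- the base `S = P/Γ` is a finite set -/
  finiteOrbits : Finite (MulAction.orbitRel.Quotient Γ P)
  /-- the action functional `𝒜 : P → ℝ` -/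
  act : P → ℝ
  /-- the period homomorphism `ω : Γ → ℝ` -/
  per : Γ → ℝ
  per_hom : ∀ g h : Γ, per (g * h) = per g + per h
  act_smul : ∀ (g : Γ) (p : P), act (g • p) = act p - per g
  /-- the incidence numbers `n : P × P → R` -/
  bnd : P → P → R
  bnd_vanish : ∀ p q : P, bnd p q ≠ 0 → act q < act p
  bnd_equivariant : ∀ (g : Γ) (p q : P), bnd (g • p) (g • q) = bnd p q
  bnd_chain : ∀ p : P, ∀ C : ℝ, {q : P | bnd p q ≠ 0 ∧ C < act q}.Finite
  bdry_isChain : ∀ c : P → R, IsFloerChain act c → IsFloerChain act (floerBdry bnd c)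
  bdry_bdry : ∀ c : P → R, IsFloerChain act c → floerBdry bnd (floerBdry bnd c) = 0

/-- The set of filtration levels of the representatives of the homology class
of the cycle `c₀`; its infimum is the spectral number `ρ([c₀])`. -/
def repLevels (𝔠 : FloerComplex R Γ P) (c₀ : P → R) : Set EReal :=
  {x : EReal | ∃ c : P → R, IsFloerChain 𝔠.act c ∧ floerBdry 𝔠.bnd c = 0 ∧
    (∃ h : P → R, IsFloerChain 𝔠.act h ∧ floerBdry 𝔠.bnd h = c - c₀) ∧
    x = floerLevel 𝔠.act c}

/-!
The proof is a Gröbner-basis reduction. Finitely supported chains are the image of the finitely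
generated module `(P/Γ) →₀ R[Γ]` over the Noetherian ring `R[Γ]`, so there are finitely many
boundaries `∂w` such that the leading term (top-action part) of every nonzero boundary is an
`R`-combination of `Γ`-translates of their leading terms. If the leading term of a representative
`x = c₀ - ∂h` is such a combination, subtracting the same combination of translates of the `∂w`
lowers the top action of `x`, while `h` changes only at actions at most a fixed amount above it.
All actions met lie in the set of actions of `c₀` lowered by finitely many action gaps of the
`∂w`, which is finite above every level; if the reduction never stopped, the top actions would
tend to `-∞` and the corrections would converge to a primitive of `c₀`. So some representative
`x` has its leading term outside the span, and then no representative `c` has smaller top action,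
since `x - c` would be a boundary with the leading term of `x`.
-/

open scoped MonoidAlgebra Pointwise
open Function

section OrbitSpan

variable {k G M : Type*} [CommRing k] [Monoid G] [AddCommGroup M] [Module k M] [Module k[G] M]
  [IsScalarTower k k[G] M] [IsNoetherian k[G] M]

theorem MonoidAlgebra.exists_finset_subset_span_orbits (S : Set M) :
    ∃ T : Finset M, ↑T ⊆ S ∧ S ⊆ Submodule.span k (⋃ g, (of k G g • ·) '' (T : Set M)) := by
  obtain ⟨T, hTS, hspan⟩ := (Submodule.fg_span_iff_fg_span_finset_subset S).1
    (IsNoetherian.noetherian (Submodule.span k[G] S))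
  refine ⟨T, hTS, ?_⟩
  let W := submoduleOfSMulMem (Submodule.span k (⋃ g, (of k G g • ·) '' (T : Set M)))
    fun (g : G) v hv => by
      induction hv using Submodule.span_induction with
      | mem v hv =>
        obtain ⟨h, t, ht, rfl⟩ := Set.mem_iUnion.1 hv
        exact Submodule.subset_span
          (Set.mem_iUnion.2 ⟨g * h, t, ht, by simp only [map_mul, mul_smul]⟩)
      | zero => rw [smul_zero]; exact zero_mem _
      | add _ _ _ _ hx hy => rw [smul_add]; exact add_mem hx hy
      | smul r _ _ hx => rw [smul_algebra_smul_comm]; exact Submodule.smul_mem _ r hx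
  have hTW : Submodule.span k[G] (T : Set M) ≤ W :=
    Submodule.span_le.2 fun t ht =>
      Submodule.subset_span (Set.mem_iUnion.2 ⟨1, t, ht, by simp only [map_one, one_smul]⟩)
  exact fun v hv => hTW (hspan ▸ Submodule.subset_span hv)

theorem Representation.exists_finset_subset_span_orbits {V : Type*} [AddCommGroup V] [Module k V]
    (ρ : Representation k G V) (ψ : M →ₗ[k] V)
    (hψ : ∀ g m, ψ (MonoidAlgebra.of k G g • m) = ρ g (ψ m)) {S : Set V}
    (hS : S ⊆ Set.range ψ) :
    ∃ T : Finset V, ↑T ⊆ S ∧ S ⊆ Submodule.span k (⋃ g, ρ g '' (T : Set V)) := by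
  classical
  obtain ⟨T, hTS, hspan⟩ :=
    MonoidAlgebra.exists_finset_subset_span_orbits (k := k) (G := G) (ψ ⁻¹' S)
  refine ⟨T.image ψ, by simpa [Set.image_subset_iff] using hTS, fun v hv => ?_⟩
  obtain ⟨m, rfl⟩ := hS hv
  have := Submodule.mem_map_of_mem (f := ψ) (hspan hv)
  rw [Submodule.map_span, Set.image_iUnion] at this
  simpa only [Finset.coe_image, ← Set.image_comp, comp_def, hψ, SetLike.mem_coe] using this

end OrbitSpan

section ActionSets

theorem exists_pos_forall_le_of_finite {D : Set ℝ} (hpos : ∀ d ∈ D, 0 < d)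
    (hfin : {d ∈ D | d ≤ 1}.Finite) : ∃ δ > 0, ∀ d ∈ D, δ ≤ d := by
  obtain ⟨δ, hδ, hmin⟩ := Set.exists_min_image _ id (hfin.insert 1) (Set.insert_nonempty _ _)
  refine ⟨δ, ?_, fun d hd => ?_⟩
  · rcases hδ with rfl | ⟨hδD, -⟩
    exacts [one_pos, hpos δ hδD]
  · rcases le_or_gt d 1 with hd1 | hd1
    · exact hmin d (Or.inr ⟨hd, hd1⟩)
    · exact (hmin 1 (Set.mem_insert _ _)).trans hd1.le

theorem AddSubmonoid.finite_closure_inter_Iic {D : Set ℝ} (hpos : ∀ d ∈ D, 0 < d)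
    (hfin : ∀ B, {d ∈ D | d ≤ B}.Finite) (B : ℝ) :
    {x ∈ AddSubmonoid.closure D | x ≤ B}.Finite := by
  classical
  obtain ⟨δ, hδ, hδD⟩ := exists_pos_forall_le_of_finite hpos (hfin 1)
  set F := (hfin B).toFinset
  set N := ⌈B / δ⌉₊
  refine ((Multiset.powerset (N • F.val)).toFinset.finite_toSet.image Multiset.sum).subset ?_
  rintro x ⟨hx, hxB⟩
  obtain ⟨m, hmD, rfl⟩ := AddSubmonoid.exists_multiset_of_mem_closure hx
  have hcard : m.card ≤ N := by
    have := Multiset.card_nsmul_le_sum fun d hd => hδD d (hmD d hd)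
    rw [nsmul_eq_mul] at this
    exact_mod_cast ((le_div_iff₀ hδ).2 (this.trans hxB)).trans (Nat.le_ceil _)
  refine ⟨m, ?_, rfl⟩
  rw [Finset.mem_coe, Multiset.mem_toFinset, Multiset.mem_powerset, Multiset.le_iff_count]
  intro d
  by_cases hd : d ∈ m
  · have hdB := Multiset.single_le_sum (fun d hd => (hpos d (hmD d hd)).le) d hd
    rw [Multiset.count_nsmul,
      Multiset.count_eq_one_of_mem F.nodup ((hfin B).mem_toFinset.2 ⟨hmD d hd, hdB.trans hxB⟩),
      mul_one]
    exact (Multiset.count_le_card d m).trans hcard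
  · rw [Multiset.count_eq_zero_of_notMem hd]
    exact Nat.zero_le _

theorem finite_sub_closure_inter_Ioi {A D : Set ℝ} (hA : ∀ C, {a ∈ A | C < a}.Finite)
    (hpos : ∀ d ∈ D, 0 < d) (hD : ∀ B, {d ∈ D | d ≤ B}.Finite) (C : ℝ) :
    {e ∈ A - AddSubmonoid.closure D | C < e}.Finite := by
  obtain ⟨M, hM⟩ := (hA C).bddAbove
  refine ((hA C).image2 (· - ·)
    (AddSubmonoid.finite_closure_inter_Iic hpos hD (M - C))).subset ?_
  rintro _ ⟨⟨a, ha, x, hx, rfl⟩, hC⟩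
  have hx0 : 0 ≤ x := AddSubmonoid.closure_induction (fun d hd => (hpos d hd).le) le_rfl
    (fun _ _ _ _ => add_nonneg) hx
  have haC : C < a := by linarith
  exact ⟨a, ⟨ha, haC⟩, x, ⟨hx, by linarith [hM ⟨ha, haC⟩]⟩, rfl⟩

theorem tendsto_atBot_of_strictAnti_of_finite {E : Set ℝ} (hE : ∀ C, {e ∈ E | C < e}.Finite)
    {t : ℕ → ℝ} (ht : StrictAnti t) (htE : ∀ j, t j ∈ E) : Tendsto t atTop atBot := by
  refine tendsto_atBot.2 fun C => ?_
  obtain ⟨j, hj⟩ : ∃ j, t j ≤ C := by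
    by_contra! h
    exact (hE C).not_infinite
      (Set.infinite_of_injective_forall_mem ht.injective fun j => ⟨htE j, h j⟩)
  exact eventually_atTop.2 ⟨j, fun i hi => (ht.antitone hi).trans hj⟩

end ActionSets

section Chains

variable (act : P → ℝ)

def floerChains : Submodule R (P → R) where
  carrier := {c | IsFloerChain act c}
  zero_mem' C := by simp
  add_mem' {c c'} hc hc' C := ((hc C).union (hc' C)).subset fun p ⟨hp, hpC⟩ => by
    by_cases h : c p = 0
    · exact Or.inr ⟨by simpa [h] using hp, hpC⟩
    · exact Or.inl ⟨h, hpC⟩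
  smul_mem' r c hc C := (hc C).subset fun p ⟨hp, hpC⟩ => ⟨right_ne_zero_of_mul hp, hpC⟩

-- Junk value `0` at `c = 0`, where `floerLevel act 0 = ⊥`.
def topAction (c : P → R) : ℝ := sSup (act '' support c)

def levelProj (t : ℝ) : (P → R) →ₗ[R] (P → R) where
  toFun := (act ⁻¹' {t}).indicator
  map_add' := Set.indicator_add _
  map_smul' r c := Set.indicator_const_smul _ r c

def leadingTerm (c : P → R) : P → R := levelProj act (topAction act c) c

def actionDrops (V : Set (P → R)) : Set ℝ :=
  {d | 0 < d ∧ ∃ v ∈ V, ∃ p, v p ≠ 0 ∧ topAction act v - act p = d}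

variable {act} {c : P → R}

theorem mem_floerChains_of_eqOn (h : ∀ C, ∃ c' ∈ floerChains act, Set.EqOn c c' {p | C < act p}) :
    c ∈ floerChains act := fun C => by
  obtain ⟨c', hc', heq⟩ := h C
  exact (hc' C).subset fun p ⟨hp, hpC⟩ => ⟨by rwa [← heq hpC], hpC⟩

theorem exists_apply_ne_zero_of_sum_smul {ι : Type*} {s : Finset ι} {a : ι → R} {f : ι → P → R}
    {p : P} (h : (∑ i ∈ s, a i • f i) p ≠ 0) : ∃ i ∈ s, f i p ≠ 0 := by
  rw [Finset.sum_apply] at h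
  obtain ⟨i, hi, hne⟩ := Finset.exists_ne_zero_of_sum_ne_zero h
  exact ⟨i, hi, right_ne_zero_of_mul hne⟩

theorem isGreatest_topAction (hc : c ∈ floerChains act) (hc0 : c ≠ 0) :
    IsGreatest (act '' support c) (topAction act c) := by
  obtain ⟨p₀, hp₀⟩ := ne_iff.1 hc0
  obtain ⟨p, ⟨hp, -⟩, hmax⟩ :=
    Set.exists_max_image _ act (hc (act p₀ - 1)) ⟨p₀, hp₀, by linarith⟩
  have hG : IsGreatest (act '' support c) (act p) := by
    refine ⟨⟨p, hp, rfl⟩, ?_⟩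
    rintro _ ⟨q, hq, rfl⟩
    by_cases hq' : act p₀ - 1 < act q
    · exact hmax q ⟨hq, hq'⟩
    · linarith [hmax p₀ ⟨hp₀, by linarith⟩]
  rwa [topAction, hG.csSup_eq]

theorem topAction_eq_of_isGreatest {t : ℝ} (h : IsGreatest (act '' support c) t) :
    topAction act c = t :=
  h.csSup_eq

theorem le_topAction (hc : c ∈ floerChains act) {p : P} (hp : c p ≠ 0) :
    act p ≤ topAction act c :=
  (isGreatest_topAction hc fun h => hp (congrFun h p)).2 ⟨p, hp, rfl⟩

theorem exists_act_eq_topAction (hc : c ∈ floerChains act) (hc0 : c ≠ 0) :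
    ∃ p, c p ≠ 0 ∧ act p = topAction act c :=
  (isGreatest_topAction hc hc0).1

theorem floerLevel_eq_topAction (hc : c ∈ floerChains act) (hc0 : c ≠ 0) :
    floerLevel act c = topAction act c := by
  obtain ⟨p, hp, hpt⟩ := exists_act_eq_topAction hc hc0
  refine le_antisymm (iSup₂_le fun q hq => EReal.coe_le_coe_iff.2 (le_topAction hc hq)) ?_
  rw [← hpt]
  exact le_iSup₂ (f := fun q (_ : q ∈ {q | c q ≠ 0}) => (act q : EReal)) p hp

theorem levelProj_apply (t : ℝ) (c : P → R) (p : P) :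
    levelProj act t c p = if act p = t then c p else 0 := by
  simp only [levelProj, LinearMap.coe_mk, AddHom.coe_mk, Set.indicator, Set.mem_preimage,
    Set.mem_singleton_iff]

theorem levelProj_levelProj (s t : ℝ) (c : P → R) :
    levelProj act t (levelProj act s c) = if s = t then levelProj act s c else 0 := by
  ext p
  split_ifs with h <;> simp only [levelProj_apply] <;> split_ifs <;> simp_all

theorem finite_support_levelProj (hc : c ∈ floerChains act) (t : ℝ) :
    (support (levelProj act t c)).Finite :=
  (hc (t - 1)).subset fun p hp => by
    rw [mem_support, levelProj_apply] at hp
    split_ifs at hp with h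
    exacts [⟨hp, by linarith⟩, absurd rfl hp]

theorem leadingTerm_ne_zero (hc : c ∈ floerChains act) (hc0 : c ≠ 0) :
    leadingTerm act c ≠ 0 := by
  obtain ⟨p, hp, hpt⟩ := exists_act_eq_topAction hc hc0
  exact ne_iff.2 ⟨p, by rwa [leadingTerm, levelProj_apply, if_pos hpt]⟩

theorem leadingTerm_sub_of_forall_lt {x : P → R} (hx : x ∈ floerChains act) (hx0 : x ≠ 0)
    (hc : ∀ p, c p ≠ 0 → act p < topAction act x) :
    leadingTerm act (x - c) = leadingTerm act x := by
  obtain ⟨p, hp, hpt⟩ := exists_act_eq_topAction hx hx0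
  have hcp : c p = 0 := by_contra fun h => (hc p h).ne hpt
  have htop : topAction act (x - c) = topAction act x := by
    refine topAction_eq_of_isGreatest ⟨⟨p, by simpa [hcp] using hp, hpt⟩, ?_⟩
    rintro _ ⟨q, hq, rfl⟩
    by_cases hxq : x q = 0
    · exact (hc q (by simpa [hxq] using hq)).le
    · exact le_topAction hx hxq
  have hproj : levelProj act (topAction act x) c = 0 := by
    ext q
    rw [levelProj_apply]
    split_ifs with hq
    · exact by_contra fun h => (hc q h).ne hq
    · rfl
  rw [leadingTerm, leadingTerm, htop, map_sub, hproj, sub_zero]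

theorem sub_apply_eq_zero_of_le {x z : P → R} (hx : x ∈ floerChains act)
    (hz : ∀ p, z p ≠ 0 → act p ≤ topAction act x)
    (htop : levelProj act (topAction act x) z = leadingTerm act x) {p : P}
    (hp : topAction act x ≤ act p) : (x - z) p = 0 := by
  rcases hp.lt_or_eq with hp | hp
  · rw [Pi.sub_apply, not_not.1 fun h => (le_topAction hx h).not_gt hp,
      not_not.1 fun h => (hz p h).not_gt hp, sub_self]
  · have := congrFun htop p
    rw [levelProj_apply, if_pos hp.symm, leadingTerm, levelProj_apply, if_pos hp.symm] at this
    rw [Pi.sub_apply, this, sub_self]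

theorem leadingTerm_mem_span_of_topAction_eq {V : Set (P → R)} {x : P → R}
    (hx : leadingTerm act x ∈ Submodule.span R (leadingTerm act '' V)) :
    leadingTerm act x ∈
      Submodule.span R (leadingTerm act '' {v ∈ V | topAction act v = topAction act x}) := by
  have := Submodule.apply_mem_span_image_of_mem_span (levelProj act (topAction act x)) hx
  rw [leadingTerm, levelProj_levelProj, if_pos rfl, ← Set.image_comp] at this
  refine Submodule.span_le.2 ?_ this
  rintro _ ⟨v, hv, rfl⟩
  simp only [comp_apply, leadingTerm, levelProj_levelProj]
  split_ifs with h
  · exact Submodule.subset_span ⟨v, ⟨hv, h⟩, rfl⟩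
  · exact zero_mem _

theorem finite_actionDrops_of_finite {V : Set (P → R)} (hV : V.Finite)
    (hVc : ∀ v ∈ V, v ∈ floerChains act) (B : ℝ) :
    {d ∈ actionDrops act V | d ≤ B}.Finite := by
  refine (hV.biUnion fun v hv => ((hVc v hv) (topAction act v - B - 1)).image
    fun p => topAction act v - act p).subset ?_
  rintro _ ⟨⟨-, v, hv, p, hp, rfl⟩, hB⟩
  exact Set.mem_biUnion hv ⟨p, ⟨hp, by linarith⟩, rfl⟩

end Chains

section Translation

variable (R) in
def chainTranslation : Representation R Γ (P → R) where
  toFun g := LinearMap.funLeft R R (g⁻¹ • ·)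
  map_one' := by ext; simp
  map_mul' g h := by ext; simp [mul_smul]

theorem chainTranslation_apply (g : Γ) (c : P → R) (p : P) :
    chainTranslation R g c p = c (g⁻¹ • p) := rfl

theorem chainTranslation_single (g : Γ) (p : P) (r : R) :
    chainTranslation R g (Finsupp.single p r) = Finsupp.single (g • p) r := by
  classical
  ext q
  rw [chainTranslation_apply, Finsupp.single_apply, Finsupp.single_apply]
  simp only [eq_inv_smul_iff]

-- `single q a ↦ ∑ g, a g • single (g • q.out) 1`
variable (R Γ P) in
def orbitSum : (MulAction.orbitRel.Quotient Γ P →₀ R[Γ]) →ₗ[R] (P → R) :=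
  Finsupp.lsum R fun q : MulAction.orbitRel.Quotient Γ P =>
    (Finsupp.linearCombination R fun g : Γ => ⇑(Finsupp.single (g • q.out) (1 : R))) ∘ₗ
      (MonoidAlgebra.coeffLinearEquiv R).toLinearMap

theorem orbitSum_single_single (q : MulAction.orbitRel.Quotient Γ P) (g : Γ) (r : R) :
    orbitSum R Γ P (Finsupp.single q (MonoidAlgebra.single g r)) =
      Finsupp.single (g • q.out) r := by
  simp [orbitSum, ← Finsupp.coe_smul]

theorem orbitSum_of_smul (g : Γ) (m : MulAction.orbitRel.Quotient Γ P →₀ R[Γ]) :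
    orbitSum R Γ P (MonoidAlgebra.of R Γ g • m) = chainTranslation R g (orbitSum R Γ P m) := by
  induction m using Finsupp.induction_linear with
  | zero => simp
  | add m m' hm hm' => rw [smul_add, map_add, map_add, hm, hm', map_add]
  | single q a =>
    induction a using MonoidAlgebra.induction_linear with
    | zero => simp
    | add a a' ha ha' => rw [Finsupp.single_add, smul_add, map_add, map_add, ha, ha', map_add]
    | single γ r =>
      rw [Finsupp.smul_single, smul_eq_mul, MonoidAlgebra.of_apply,
        MonoidAlgebra.single_mul_single, one_mul, orbitSum_single_single, orbitSum_single_single,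
        chainTranslation_single, mul_smul]

theorem mem_range_orbitSum {c : P → R} (hc : (support c).Finite) :
    c ∈ LinearMap.range (orbitSum R Γ P) := by
  have hsum : c = ∑ p ∈ hc.toFinset, ⇑(Finsupp.single p (c p)) := by
    classical
    ext q
    simp [Finsupp.single_apply]
  rw [hsum]
  refine Submodule.sum_mem _ fun p _ => ?_
  let q : MulAction.orbitRel.Quotient Γ P := Quotient.mk'' p
  obtain ⟨g, hg⟩ : ∃ g : Γ, g • q.out = p :=
    MulAction.orbitRel_apply.1 (Setoid.symm' _ (Quotient.mk_out' p))
  exact ⟨Finsupp.single q (MonoidAlgebra.single g (c p)), by rw [orbitSum_single_single, hg]⟩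

end Translation

namespace FloerComplex

variable (𝔠 : FloerComplex R Γ P)

theorem act_inv_smul (g : Γ) (p : P) : 𝔠.act (g⁻¹ • p) = 𝔠.act p + 𝔠.per g := by
  have h1 := 𝔠.per_hom 1 1
  have hg := 𝔠.per_hom g g⁻¹
  rw [mul_one] at h1
  rw [mul_inv_cancel] at hg
  linarith [𝔠.act_smul g⁻¹ p]

variable {𝔠} {c c' : P → R}

theorem chainTranslation_mem_floerChains (g : Γ) (hc : c ∈ floerChains 𝔠.act) :
    chainTranslation R g c ∈ floerChains 𝔠.act := fun C =>
  ((hc (C + 𝔠.per g)).image (g • ·)).subset fun p ⟨hp, hpC⟩ =>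
    ⟨g⁻¹ • p, ⟨hp, by rw [act_inv_smul]; linarith⟩, smul_inv_smul g p⟩

theorem topAction_chainTranslation (g : Γ) (hc : c ∈ floerChains 𝔠.act) (hc0 : c ≠ 0) :
    topAction 𝔠.act (chainTranslation R g c) = topAction 𝔠.act c - 𝔠.per g := by
  obtain ⟨⟨p, hp, hpt⟩, hmax⟩ := isGreatest_topAction hc hc0
  refine topAction_eq_of_isGreatest ⟨⟨g • p, by simpa [chainTranslation_apply] using hp, ?_⟩, ?_⟩
  · rw [𝔠.act_smul, hpt]
  · rintro _ ⟨q, hq, rfl⟩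
    have := hmax ⟨g⁻¹ • q, hq, rfl⟩
    rw [act_inv_smul] at this
    linarith

theorem leadingTerm_chainTranslation (g : Γ) (hc : c ∈ floerChains 𝔠.act) (hc0 : c ≠ 0) :
    leadingTerm 𝔠.act (chainTranslation R g c) =
      chainTranslation R g (leadingTerm 𝔠.act c) := by
  ext p
  simp only [leadingTerm, topAction_chainTranslation g hc hc0, levelProj_apply,
    chainTranslation_apply, act_inv_smul, eq_sub_iff_add_eq]

theorem actionDrops_chainTranslation_subset {V : Set (P → R)}
    (hV : ∀ v ∈ V, v ∈ floerChains 𝔠.act ∧ v ≠ 0) :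
    actionDrops 𝔠.act (⋃ g : Γ, chainTranslation R g '' V) ⊆ actionDrops 𝔠.act V := by
  rintro _ ⟨hd, _, hv, p, hp, rfl⟩
  obtain ⟨g, v, hvV, rfl⟩ := Set.mem_iUnion.1 hv
  refine ⟨hd, v, hvV, g⁻¹ • p, hp, ?_⟩
  rw [topAction_chainTranslation g (hV v hvV).1 (hV v hvV).2, act_inv_smul]
  ring

theorem finite_support_mul_bnd (hc : c ∈ floerChains 𝔠.act) (q : P) :
    (support fun p => c p * 𝔠.bnd p q).Finite :=
  (hc (𝔠.act q)).subset fun p hp =>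
    ⟨left_ne_zero_of_mul hp, 𝔠.bnd_vanish p q (right_ne_zero_of_mul hp)⟩

theorem floerBdry_apply_congr {q : P} (h : ∀ p, 𝔠.act q < 𝔠.act p → c p = c' p) :
    floerBdry 𝔠.bnd c q = floerBdry 𝔠.bnd c' q := by
  refine finsum_congr fun p => ?_
  by_cases hpq : 𝔠.bnd p q = 0
  · simp [hpq]
  · rw [h p (𝔠.bnd_vanish p q hpq)]

theorem floerBdry_zero : floerBdry 𝔠.bnd (0 : P → R) = 0 := by
  ext q
  simp [floerBdry]

theorem floerBdry_add (hc : c ∈ floerChains 𝔠.act) (hc' : c' ∈ floerChains 𝔠.act) :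
    floerBdry 𝔠.bnd (c + c') = floerBdry 𝔠.bnd c + floerBdry 𝔠.bnd c' := by
  ext q
  simp only [floerBdry, Pi.add_apply, add_mul]
  exact finsum_add_distrib (finite_support_mul_bnd hc q) (finite_support_mul_bnd hc' q)

theorem floerBdry_smul (r : R) (hc : c ∈ floerChains 𝔠.act) :
    floerBdry 𝔠.bnd (r • c) = r • floerBdry 𝔠.bnd c := by
  ext q
  simp only [floerBdry, Pi.smul_apply, smul_eq_mul, mul_assoc]
  exact (mul_finsum' _ r (finite_support_mul_bnd hc q)).symm

theorem floerBdry_neg (c : P → R) : floerBdry 𝔠.bnd (-c) = -floerBdry 𝔠.bnd c := by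
  ext q
  simp only [floerBdry, Pi.neg_apply, neg_mul, finsum_neg_distrib]

theorem floerBdry_sub (hc : c ∈ floerChains 𝔠.act) (hc' : c' ∈ floerChains 𝔠.act) :
    floerBdry 𝔠.bnd (c - c') = floerBdry 𝔠.bnd c - floerBdry 𝔠.bnd c' := by
  rw [sub_eq_add_neg, floerBdry_add hc (neg_mem hc'), floerBdry_neg, ← sub_eq_add_neg]

theorem floerBdry_sum {ι : Type*} (s : Finset ι) {f : ι → P → R}
    (hf : ∀ i ∈ s, f i ∈ floerChains 𝔠.act) :
    floerBdry 𝔠.bnd (∑ i ∈ s, f i) = ∑ i ∈ s, floerBdry 𝔠.bnd (f i) := by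
  classical
  induction s using Finset.induction_on with
  | empty => simp only [Finset.sum_empty, floerBdry_zero]
  | insert i s hi ih =>
    rw [Finset.sum_insert hi, Finset.sum_insert hi,
      floerBdry_add (hf i (Finset.mem_insert_self i s))
        (Submodule.sum_mem _ fun j hj => hf j (Finset.mem_insert_of_mem hj)),
      ih fun j hj => hf j (Finset.mem_insert_of_mem hj)]

theorem floerBdry_chainTranslation (g : Γ) (c : P → R) :
    floerBdry 𝔠.bnd (chainTranslation R g c) = chainTranslation R g (floerBdry 𝔠.bnd c) := by
  ext q
  simp only [floerBdry, chainTranslation_apply]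
  rw [← finsum_comp_equiv (MulAction.toPerm g)]
  refine finsum_congr fun p => ?_
  simp only [MulAction.toPerm_apply, inv_smul_smul]
  rw [← 𝔠.bnd_equivariant g p (g⁻¹ • q), smul_inv_smul]

theorem sub_floerBdry_mem (hc : c ∈ floerChains 𝔠.act) (hc' : c' ∈ floerChains 𝔠.act) :
    c - floerBdry 𝔠.bnd c' ∈ floerChains 𝔠.act :=
  sub_mem hc (𝔠.bdry_isChain c' hc')

theorem exists_primitive_of_tendsto {c₀ : P → R} {h : ℕ → P → R}
    (hh : ∀ j, h j ∈ floerChains 𝔠.act) {t : ℕ → ℝ} (ht : Antitone t)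
    (ht' : Tendsto t atTop atBot) {K : ℝ}
    (hstep : ∀ j p, h (j + 1) p ≠ h j p → 𝔠.act p ≤ t j + K)
    (hrem : ∀ j p, (c₀ - floerBdry 𝔠.bnd (h j)) p ≠ 0 → 𝔠.act p ≤ t j) :
    ∃ h' ∈ floerChains 𝔠.act, floerBdry 𝔠.bnd h' = c₀ := by
  have hstab : ∀ i j, i ≤ j → Set.EqOn (h j) (h i) {p | t i + K < 𝔠.act p} := by
    intro i j hij p (hp : t i + K < 𝔠.act p)
    induction j, hij using Nat.le_induction with
    | base => rfl
    | succ j hij ih =>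
      have : h (j + 1) p = h j p := by_contra fun hne => by linarith [hstep j p hne, ht hij]
      exact this.trans ih
  have hlt : ∀ a, ∃ j, t j < a := fun a => (ht'.eventually (eventually_lt_atBot a)).exists
  choose J hJ using fun p => hlt (𝔠.act p - K)
  have hlim : ∀ j, Set.EqOn (fun p => h (J p) p) (h j) {p | t j + K < 𝔠.act p} := by
    intro j p hp
    rcases le_total j (J p) with hjJ | hJj
    · exact hstab j (J p) hjJ hp
    · exact (hstab (J p) j hJj (show t (J p) + K < 𝔠.act p by linarith [hJ p])).symm
  refine ⟨fun p => h (J p) p, mem_floerChains_of_eqOn fun C => ?_, funext fun q => ?_⟩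
  · obtain ⟨j, hj⟩ := hlt (C - K)
    exact ⟨h j, hh j, (hlim j).mono fun p (hp : C < 𝔠.act p) =>
      show t j + K < 𝔠.act p by linarith⟩
  · obtain ⟨j, hj⟩ := hlt (min (𝔠.act q - K) (𝔠.act q))
    have hjq : t j < 𝔠.act q := hj.trans_le (min_le_right _ _)
    rw [floerBdry_apply_congr fun p hp => hlim j (show t j + K < 𝔠.act p by
      linarith [min_le_left (𝔠.act q - K) (𝔠.act q)])]
    exact (sub_eq_zero.1 (not_not.1 fun hne => (hrem j q hne).not_gt hjq)).symm

variable (𝔠)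

theorem exists_finset_leadingTerm_mem_span [Group.FG Γ] [IsNoetherianRing R] :
    ∃ s : Finset (P → R), (∀ w ∈ s, w ∈ floerChains 𝔠.act ∧ floerBdry 𝔠.bnd w ≠ 0) ∧
      ∀ h ∈ floerChains 𝔠.act, floerBdry 𝔠.bnd h ≠ 0 →
        leadingTerm 𝔠.act (floerBdry 𝔠.bnd h) ∈ Submodule.span R (⋃ g : Γ,
          chainTranslation R g '' ((fun w => leadingTerm 𝔠.act (floerBdry 𝔠.bnd w)) '' s)) := by
  classical
  have := 𝔠.finiteOrbits
  have : IsNoetherianRing R[Γ] := Algebra.FiniteType.isNoetherianRing R R[Γ]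
  have : IsNoetherian R[Γ] (MulAction.orbitRel.Quotient Γ P →₀ R[Γ]) :=
    isNoetherian_of_isNoetherianRing_of_finite _ _
  obtain ⟨T, hTS, hS⟩ := (chainTranslation R).exists_finset_subset_span_orbits (orbitSum R Γ P)
    orbitSum_of_smul (S := (fun w => leadingTerm 𝔠.act (floerBdry 𝔠.bnd w)) ''
      {w | w ∈ floerChains 𝔠.act ∧ floerBdry 𝔠.bnd w ≠ 0}) (by
      rintro _ ⟨w, ⟨hw, -⟩, rfl⟩
      exact LinearMap.mem_range.1
        (mem_range_orbitSum (finite_support_levelProj (𝔠.bdry_isChain w hw) _)))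
  obtain ⟨s, hsW, rfl⟩ := Finset.subset_set_image_iff.1 hTS
  exact ⟨s, hsW, fun h hh h0 => by simpa using hS ⟨h, ⟨hh, h0⟩, rfl⟩⟩

-- The analogue of a Gröbner basis of the boundaries, with primitives of controlled action.
structure StandardBasis where
  carrier : Set (P → R)
  bound : ℝ
  exists_primitive : ∀ v ∈ carrier, ∃ φ ∈ floerChains 𝔠.act, floerBdry 𝔠.bnd φ = v ∧
    ∀ p, φ p ≠ 0 → 𝔠.act p ≤ topAction 𝔠.act v + bound
  finite_actionDrops : ∀ B, {d ∈ actionDrops 𝔠.act carrier | d ≤ B}.Finite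
  leadingTerm_mem_span : ∀ h ∈ floerChains 𝔠.act, floerBdry 𝔠.bnd h ≠ 0 →
    leadingTerm 𝔠.act (floerBdry 𝔠.bnd h) ∈ Submodule.span R (leadingTerm 𝔠.act '' carrier)

theorem nonempty_standardBasis [Group.FG Γ] [IsNoetherianRing R] :
    Nonempty 𝔠.StandardBasis := by
  classical
  obtain ⟨s, hs, hspan⟩ := 𝔠.exists_finset_leadingTerm_mem_span
  obtain ⟨K, hK⟩ :=
    (s.image fun w => topAction 𝔠.act w - topAction 𝔠.act (floerBdry 𝔠.bnd w)).bddAbove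
  have hV : ∀ v ∈ floerBdry 𝔠.bnd '' s, v ∈ floerChains 𝔠.act ∧ v ≠ 0 := by
    rintro _ ⟨w, hw, rfl⟩
    exact ⟨𝔠.bdry_isChain w (hs w hw).1, (hs w hw).2⟩
  refine ⟨⟨⋃ g : Γ, chainTranslation R g '' (floerBdry 𝔠.bnd '' s), K, ?_, fun B => ?_, ?_⟩⟩
  · intro v hv
    obtain ⟨g, _, ⟨w, hw, rfl⟩, rfl⟩ := Set.mem_iUnion.1 hv
    refine ⟨chainTranslation R g w, chainTranslation_mem_floerChains g (hs w hw).1,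
      floerBdry_chainTranslation g w, fun p hp => ?_⟩
    have hwp := le_topAction (hs w hw).1 hp
    have hKw := hK (Finset.mem_image_of_mem _ hw)
    rw [topAction_chainTranslation g (hV _ ⟨w, hw, rfl⟩).1 (hV _ ⟨w, hw, rfl⟩).2]
    rw [act_inv_smul] at hwp
    linarith
  · exact (finite_actionDrops_of_finite (s.finite_toSet.image _) (fun v hv => (hV v hv).1) B).subset
      fun d hd => ⟨actionDrops_chainTranslation_subset hV hd.1, hd.2⟩
  · intro h hh h0
    refine Submodule.span_mono ?_ (hspan h hh h0)
    intro x hx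
    obtain ⟨g, _, ⟨w, hw, rfl⟩, rfl⟩ := Set.mem_iUnion.1 hx
    exact ⟨chainTranslation R g (floerBdry 𝔠.bnd w), Set.mem_iUnion.2 ⟨g, _, ⟨w, hw, rfl⟩, rfl⟩,
      leadingTerm_chainTranslation g (hV _ ⟨w, hw, rfl⟩).1 (hV _ ⟨w, hw, rfl⟩).2⟩

namespace StandardBasis

variable {𝔠} (𝔅 : 𝔠.StandardBasis)

theorem mem_floerChains {v : P → R} (hv : v ∈ 𝔅.carrier) : v ∈ floerChains 𝔠.act := by
  obtain ⟨φ, hφ, rfl, -⟩ := 𝔅.exists_primitive v hv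
  exact 𝔠.bdry_isChain φ hφ

theorem exists_floerBdry_cancel_leadingTerm {x : P → R}
    (hlead : leadingTerm 𝔠.act x ∈ Submodule.span R (leadingTerm 𝔠.act '' 𝔅.carrier)) :
    ∃ φ ∈ floerChains 𝔠.act, (∀ p, φ p ≠ 0 → 𝔠.act p ≤ topAction 𝔠.act x + 𝔅.bound) ∧
      levelProj 𝔠.act (topAction 𝔠.act x) (floerBdry 𝔠.bnd φ) = leadingTerm 𝔠.act x ∧
      ∀ p, floerBdry 𝔠.bnd φ p ≠ 0 →
        ∃ v ∈ 𝔅.carrier, v p ≠ 0 ∧ topAction 𝔠.act v = topAction 𝔠.act x := by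
  obtain ⟨l, hl, hlx⟩ := (Finsupp.mem_span_image_iff_linearCombination R).1
    (leadingTerm_mem_span_of_topAction_eq hlead)
  have hlV : ∀ v ∈ l.support, v ∈ 𝔅.carrier ∧ topAction 𝔠.act v = topAction 𝔠.act x :=
    fun v hv => hl hv
  choose! prim hprim hprim_bdry hprim_le using 𝔅.exists_primitive
  have hφ : ∀ v ∈ l.support, l v • prim v ∈ floerChains 𝔠.act :=
    fun v hv => Submodule.smul_mem _ _ (hprim v (hlV v hv).1)
  have hbdry : floerBdry 𝔠.bnd (∑ v ∈ l.support, l v • prim v) = ∑ v ∈ l.support, l v • v := by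
    rw [floerBdry_sum _ hφ]
    refine Finset.sum_congr rfl fun v hv => ?_
    rw [floerBdry_smul _ (hprim v (hlV v hv).1), hprim_bdry v (hlV v hv).1]
  refine ⟨_, Submodule.sum_mem _ hφ, fun p hp => ?_, ?_, fun p hp => ?_⟩
  · obtain ⟨v, hv, hvp⟩ := exists_apply_ne_zero_of_sum_smul hp
    rw [← (hlV v hv).2]
    exact hprim_le v (hlV v hv).1 p hvp
  · rw [hbdry, ← hlx, Finsupp.linearCombination_apply, Finsupp.sum, map_sum]
    exact Finset.sum_congr rfl fun v hv => by rw [map_smul, leadingTerm, (hlV v hv).2]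
  · rw [hbdry] at hp
    obtain ⟨v, hv, hvp⟩ := exists_apply_ne_zero_of_sum_smul hp
    exact ⟨v, (hlV v hv).1, hvp, (hlV v hv).2⟩

theorem exists_reduction {x : P → R} (hx : x ∈ floerChains 𝔠.act)
    (hlead : leadingTerm 𝔠.act x ∈ Submodule.span R (leadingTerm 𝔠.act '' 𝔅.carrier)) :
    ∃ φ ∈ floerChains 𝔠.act, (∀ p, φ p ≠ 0 → 𝔠.act p ≤ topAction 𝔠.act x + 𝔅.bound) ∧
      ∀ p, (x - floerBdry 𝔠.bnd φ) p ≠ 0 → 𝔠.act p < topAction 𝔠.act x ∧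
        (x p ≠ 0 ∨ topAction 𝔠.act x - 𝔠.act p ∈ actionDrops 𝔠.act 𝔅.carrier) := by
  obtain ⟨φ, hφ, hφ_le, htop, hsupp⟩ := 𝔅.exists_floerBdry_cancel_leadingTerm hlead
  have hle : ∀ p, floerBdry 𝔠.bnd φ p ≠ 0 → 𝔠.act p ≤ topAction 𝔠.act x := fun p hp => by
    obtain ⟨v, hv, hvp, hvt⟩ := hsupp p hp
    exact hvt ▸ le_topAction (𝔅.mem_floerChains hv) hvp
  refine ⟨φ, hφ, hφ_le, fun p hp => ?_⟩
  have hlt : 𝔠.act p < topAction 𝔠.act x :=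
    not_le.1 fun htp => hp (sub_apply_eq_zero_of_le hx hle htop htp)
  refine ⟨hlt, or_iff_not_imp_left.2 fun hxp => ?_⟩
  obtain ⟨v, hv, hvp, hvt⟩ :=
    hsupp p fun h0 => hp (by rw [Pi.sub_apply, not_not.1 hxp, h0, sub_self])
  exact ⟨sub_pos.2 hlt, v, hv, p, hvp, by rw [hvt]⟩

-- The supports of all representatives produced by reduction stay in this set, which is finite
-- above every level.
def reachableActions (c₀ : P → R) : Set ℝ :=
  𝔠.act '' support c₀ - AddSubmonoid.closure (actionDrops 𝔠.act 𝔅.carrier)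

variable {𝔅} {c₀ : P → R}

theorem act_mem_reachableActions {p : P} (hp : c₀ p ≠ 0) : 𝔠.act p ∈ 𝔅.reachableActions c₀ :=
  Set.mem_sub.2 ⟨𝔠.act p, ⟨p, hp, rfl⟩, 0, zero_mem _, sub_zero _⟩

theorem sub_mem_reachableActions {e d : ℝ} (he : e ∈ 𝔅.reachableActions c₀)
    (hd : d ∈ actionDrops 𝔠.act 𝔅.carrier) : e - d ∈ 𝔅.reachableActions c₀ := by
  obtain ⟨a, ha, x, hx, rfl⟩ := Set.mem_sub.1 he
  exact Set.mem_sub.2 ⟨a, ha, x + d, add_mem hx (AddSubmonoid.subset_closure hd), by ring⟩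

theorem finite_reachableActions_inter_Ioi (hc₀ : c₀ ∈ floerChains 𝔠.act) (C : ℝ) :
    {e ∈ 𝔅.reachableActions c₀ | C < e}.Finite := by
  refine finite_sub_closure_inter_Ioi (fun C => ?_) (fun _ hd => hd.1) 𝔅.finite_actionDrops C
  refine ((hc₀ C).image 𝔠.act).subset ?_
  rintro _ ⟨⟨p, hp, rfl⟩, hC⟩
  exact ⟨p, ⟨hp, hC⟩, rfl⟩

theorem exists_lower_representative (hc₀ : c₀ ∈ floerChains 𝔠.act) {h : P → R}
    (hh : h ∈ floerChains 𝔠.act) (hx0 : c₀ - floerBdry 𝔠.bnd h ≠ 0)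
    (hE : ∀ p, (c₀ - floerBdry 𝔠.bnd h) p ≠ 0 → 𝔠.act p ∈ 𝔅.reachableActions c₀)
    (hlead : leadingTerm 𝔠.act (c₀ - floerBdry 𝔠.bnd h) ∈
      Submodule.span R (leadingTerm 𝔠.act '' 𝔅.carrier)) :
    ∃ h' ∈ floerChains 𝔠.act,
      (∀ p, (c₀ - floerBdry 𝔠.bnd h') p ≠ 0 → 𝔠.act p < topAction 𝔠.act (c₀ - floerBdry 𝔠.bnd h) ∧
        𝔠.act p ∈ 𝔅.reachableActions c₀) ∧
      ∀ p, h' p ≠ h p → 𝔠.act p ≤ topAction 𝔠.act (c₀ - floerBdry 𝔠.bnd h) + 𝔅.bound := by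
  have hx := sub_floerBdry_mem hc₀ hh
  obtain ⟨φ, hφ, hφ_le, hred⟩ := 𝔅.exists_reduction hx hlead
  obtain ⟨q, hq, hqt⟩ := exists_act_eq_topAction hx hx0
  have hsub : c₀ - floerBdry 𝔠.bnd (h + φ) = c₀ - floerBdry 𝔠.bnd h - floerBdry 𝔠.bnd φ := by
    rw [floerBdry_add hh hφ, sub_add_eq_sub_sub]
  refine ⟨h + φ, add_mem hh hφ, fun p hp => ?_, fun p hp => hφ_le p (by simpa using hp)⟩
  rw [hsub] at hp
  refine ⟨(hred p hp).1, (hred p hp).2.elim (hE p) fun hd => ?_⟩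
  have := sub_mem_reachableActions (hqt ▸ hE q hq) hd
  rwa [sub_sub_cancel] at this

theorem exists_leadingTerm_notMem_span (hc₀ : c₀ ∈ floerChains 𝔠.act)
    (hc₀' : ¬ ∃ h : P → R, IsFloerChain 𝔠.act h ∧ floerBdry 𝔠.bnd h = c₀) :
    ∃ h ∈ floerChains 𝔠.act, leadingTerm 𝔠.act (c₀ - floerBdry 𝔠.bnd h) ∉
      Submodule.span R (leadingTerm 𝔠.act '' 𝔅.carrier) := by
  by_contra! hall
  have hx0 : ∀ h ∈ floerChains 𝔠.act, c₀ - floerBdry 𝔠.bnd h ≠ 0 :=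
    fun h hh h0 => hc₀' ⟨h, hh, (sub_eq_zero.1 h0).symm⟩
  let State := {h : P → R // h ∈ floerChains 𝔠.act ∧
    ∀ p, (c₀ - floerBdry 𝔠.bnd h) p ≠ 0 → 𝔠.act p ∈ 𝔅.reachableActions c₀}
  let t : State → ℝ := fun s => topAction 𝔠.act (c₀ - floerBdry 𝔠.bnd s.1)
  have ht : ∀ s : State, t s ∈ 𝔅.reachableActions c₀ := fun s => by
    obtain ⟨p, hp, hpt⟩ :=
      exists_act_eq_topAction (sub_floerBdry_mem hc₀ s.2.1) (hx0 _ s.2.1)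
    have := s.2.2 p hp
    rwa [hpt] at this
  have hnext : ∀ s : State, ∃ s' : State,
      t s' < t s ∧ ∀ p, s'.1 p ≠ s.1 p → 𝔠.act p ≤ t s + 𝔅.bound := by
    rintro ⟨h, hh, hE⟩
    obtain ⟨h', hh', hx', hstep⟩ := exists_lower_representative hc₀ hh (hx0 h hh) hE (hall h hh)
    refine ⟨⟨h', hh', fun p hp => (hx' p hp).2⟩, ?_, hstep⟩
    obtain ⟨p, hp, hpt⟩ := exists_act_eq_topAction (sub_floerBdry_mem hc₀ hh') (hx0 h' hh')
    exact hpt.symm.trans_lt (hx' p hp).1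
  choose next hlt hstep using hnext
  let seq : ℕ → State := fun j => next^[j]
    ⟨0, zero_mem _, fun p hp => act_mem_reachableActions (by simpa [floerBdry_zero] using hp)⟩
  have hseq : ∀ j, seq (j + 1) = next (seq j) := fun j => iterate_succ_apply' next j _
  have hanti : StrictAnti (t ∘ seq) :=
    strictAnti_nat_of_succ_lt fun j => by simpa only [comp_apply, hseq] using hlt (seq j)
  obtain ⟨h, hh, hbdry⟩ := exists_primitive_of_tendsto (fun j => (seq j).2.1) hanti.antitone
    (tendsto_atBot_of_strictAnti_of_finite (finite_reachableActions_inter_Ioi hc₀) hanti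
      fun j => ht (seq j))
    (fun j p hp => by rw [hseq] at hp; exact hstep _ p hp)
    (fun j p hp => le_topAction (sub_floerBdry_mem hc₀ (seq j).2.1) hp)
  exact hc₀' ⟨h, hh, hbdry⟩

variable (𝔅)

theorem isLeast_repLevels (hc₀ : c₀ ∈ floerChains 𝔠.act) (hcycle : floerBdry 𝔠.bnd c₀ = 0)
    (hc₀' : ¬ ∃ h : P → R, IsFloerChain 𝔠.act h ∧ floerBdry 𝔠.bnd h = c₀) {h : P → R}
    (hh : h ∈ floerChains 𝔠.act) (hlead : leadingTerm 𝔠.act (c₀ - floerBdry 𝔠.bnd h) ∉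
      Submodule.span R (leadingTerm 𝔠.act '' 𝔅.carrier)) :
    IsLeast (repLevels 𝔠 c₀) (topAction 𝔠.act (c₀ - floerBdry 𝔠.bnd h)) := by
  set x := c₀ - floerBdry 𝔠.bnd h with hx_def
  have hx := sub_floerBdry_mem hc₀ hh
  have hx0 : x ≠ 0 := fun h0 => hc₀' ⟨h, hh, (sub_eq_zero.1 h0).symm⟩
  refine ⟨⟨x, hx, ?_, ⟨-h, neg_mem hh, ?_⟩, (floerLevel_eq_topAction hx hx0).symm⟩, ?_⟩
  · rw [floerBdry_sub hc₀ (𝔠.bdry_isChain h hh), hcycle, 𝔠.bdry_bdry h hh, sub_zero]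
  · rw [floerBdry_neg, sub_sub_cancel_left]
  rintro _ ⟨c, hc, -, ⟨h₂, hh₂, hc₂⟩, rfl⟩
  have hc0 : c ≠ 0 := by
    rintro rfl
    refine hc₀' ⟨-h₂, neg_mem (show h₂ ∈ floerChains 𝔠.act from hh₂), ?_⟩
    rw [floerBdry_neg, hc₂, zero_sub, neg_neg]
  rw [floerLevel_eq_topAction hc hc0, EReal.coe_le_coe_iff]
  by_contra! hlt
  have hy : floerBdry 𝔠.bnd (-(h + h₂)) = x - c := by
    rw [floerBdry_neg, floerBdry_add hh hh₂, hc₂, hx_def]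
    abel
  have hlead_eq : leadingTerm 𝔠.act (x - c) = leadingTerm 𝔠.act x :=
    leadingTerm_sub_of_forall_lt hx hx0 fun p hp => (le_topAction hc hp).trans_lt hlt
  have hy0 : x - c ≠ 0 := fun h0 => leadingTerm_ne_zero hx hx0 (by
    rw [← hlead_eq, h0, leadingTerm, map_zero])
  have := 𝔅.leadingTerm_mem_span _ (neg_mem (add_mem hh hh₂)) (hy ▸ hy0)
  rw [hy, hlead_eq] at this
  exact hlead this

end StandardBasis

end FloerComplex

/-- spectrality: over a Noetherian ring, the spectral number of
any nonzero homology class lies in the image of the action functional,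
`ρ(a) ∈ 𝒜(P)`. -/
theorem spectrality [Group.FG Γ] [IsNoetherianRing R]
    (𝔠 : FloerComplex R Γ P) (c₀ : P → R)
    (hchain : IsFloerChain 𝔠.act c₀) (hcycle : floerBdry 𝔠.bnd c₀ = 0)
    (hnonzero : ¬ ∃ h : P → R, IsFloerChain 𝔠.act h ∧ floerBdry 𝔠.bnd h = c₀) :
    ∃ p : P, ((𝔠.act p : ℝ) : EReal) = sInf (repLevels 𝔠 c₀) := by
  obtain ⟨𝔅⟩ := 𝔠.nonempty_standardBasis
  obtain ⟨h, hh, hlead⟩ := 𝔅.exists_leadingTerm_notMem_span hchain hnonzero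
  obtain ⟨p, -, hp⟩ := exists_act_eq_topAction (FloerComplex.sub_floerBdry_mem hchain hh)
    fun h0 => hnonzero ⟨h, hh, (sub_eq_zero.1 h0).symm⟩
  exact ⟨p, by rw [(𝔅.isLeast_repLevels hchain hcycle hnonzero hh hlead).csInf_eq, hp]⟩
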